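/- arXiv:1810.03128 — 7 statements merged into one kernel-verified Lean document; each statement's English description precedes it below -/
import Mathlib

section
/- Let (X, d) be a finite nonempty metric space. If for any two closed balls B₁, B₂ with B₁ ∩ B₂ ≠ ∅ one has B₁ ⊆ B₂ or B₂ ⊆ B₁, then d is an ultrametric, i.e., d(x,z) ≤ max{d(x,y), d(y,z)} for all x, y, z. -/
theorem ultrametric_of_comparable_balls {X : Type*} [MetricSpace X] [Fintype X] [Nonempty X]
    (h : ∀ (c₁ c₂ : X) (r₁ r₂ : ℝ), 0 ≤ r₁ → 0 ≤ r₂ →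
      (Metric.closedBall c₁ r₁ ∩ Metric.closedBall c₂ r₂).Nonempty →
        Metric.closedBall c₁ r₁ ⊆ Metric.closedBall c₂ r₂ ∨
          Metric.closedBall c₂ r₂ ⊆ Metric.closedBall c₁ r₁) :
    ∀ x y z : X, dist x z ≤ max (dist x y) (dist y z) := by
  intro x y z
  have hy : y ∈ Metric.closedBall x (dist x y) ∩ Metric.closedBall z (dist y z) := by
    simp [Metric.mem_closedBall, dist_comm]
  rcases h x z (dist x y) (dist y z) dist_nonneg dist_nonneg ⟨y, hy⟩ with hc | hc
  · have := hc (Metric.mem_closedBall_self dist_nonneg)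
    simp only [Metric.mem_closedBall] at this
    exact le_max_of_le_right this
  · have := hc (Metric.mem_closedBall_self dist_nonneg)
    simp only [Metric.mem_closedBall, dist_comm] at this
    exact le_max_of_le_left this
end

section
/- Let (X, d) be a finite ultrametric space with |X| ≥ 2. Define the diametrical graph G on vertex set X where u and v are adjacent iff d(u,v) = diam X. Then G is complete multipartite: the relation 'd(u,v) < diam X' is an equivalence relation on X with at least 2 equivalence classes, and u, v are adjacent in G iff they lie in distinct classes. -/
theorem diametrical_graph_complete_multipartite {X : Type*} [MetricSpace X] [Fintype X]
    [Nontrivial X] (hu : ∀ x y z : X, dist x z ≤ max (dist x y) (dist y z)) :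
    Equivalence (fun u v : X => dist u v < Metric.diam (Set.univ : Set X)) ∧
      (∃ u v : X, ¬ dist u v < Metric.diam (Set.univ : Set X)) ∧
      (∀ u v : X, dist u v = Metric.diam (Set.univ : Set X) ↔
        ¬ dist u v < Metric.diam (Set.univ : Set X)) := by
  have hb : Bornology.IsBounded (Set.univ : Set X) := Set.finite_univ.isBounded
  obtain ⟨p, -, hp⟩ := Finset.exists_max_image (Finset.univ : Finset (X × X))
    (fun q => dist q.1 q.2) ⟨(Classical.arbitrary X, Classical.arbitrary X), Finset.mem_univ _⟩
  have hle : ∀ x y : X, dist x y ≤ Metric.diam (Set.univ : Set X) := fun x y =>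
    Metric.dist_le_diam_of_mem hb trivial trivial
  have hD : Metric.diam (Set.univ : Set X) = dist p.1 p.2 :=
    le_antisymm
      (Metric.diam_le_of_forall_dist_le dist_nonneg fun x _ y _ =>
        hp (x, y) (Finset.mem_univ _))
      (hle p.1 p.2)
  have hpos : 0 < Metric.diam (Set.univ : Set X) := by
    obtain ⟨x, y, hxy⟩ := exists_pair_ne X
    exact lt_of_lt_of_le (dist_pos.2 hxy) (hle x y)
  refine ⟨⟨fun u => by simpa using hpos, fun {u v} h => by rwa [dist_comm],
    fun {u v w} h1 h2 => lt_of_le_of_lt (hu u v w) (max_lt h1 h2)⟩,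
    ⟨p.1, p.2, by rw [hD]; exact lt_irrefl _⟩,
    fun u v => ⟨fun h => by rw [h]; exact lt_irrefl _,
      fun h => le_antisymm (hle u v) (not_lt.1 h)⟩⟩
end

section
/- Let (X, d) be a finite ultrametric space and B₁, B₂ two distinct closed balls in X. Then the Hausdorff distance between B₁ and B₂ equals the diameter of B₁ ∪ B₂. -/
open Metric

private lemma ultra_const {X : Type*} [MetricSpace X]
    (hu : ∀ x y z : X, dist x z ≤ max (dist x y) (dist y z))
    {c b : X} {r : ℝ} (hb : r < dist b c) {a : X} (ha : a ∈ closedBall c r) :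
    dist b a = dist b c := by
  have ha' : dist a c ≤ r := mem_closedBall.mp ha
  apply le_antisymm
  · have h1 := hu b c a
    have : dist c a ≤ r := by rw [dist_comm]; exact ha'
    calc dist b a ≤ max (dist b c) (dist c a) := hu b c a
      _ = dist b c := max_eq_left (by linarith)
  · have h2 := hu b a c
    rcases le_max_iff.mp h2 with h | h
    · exact h
    · linarith

private lemma ball_subset_ball' {X : Type*} [MetricSpace X]
    (hu : ∀ x y z : X, dist x z ≤ max (dist x y) (dist y z))
    {c₁ c₂ z : X} {r₁ r₂ : ℝ} (hz₁ : z ∈ closedBall c₁ r₁) (hz₂ : z ∈ closedBall c₂ r₂)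
    (hle : r₁ ≤ r₂) : closedBall c₁ r₁ ⊆ closedBall c₂ r₂ := by
  intro a ha
  simp only [mem_closedBall] at *
  have h1 : dist a z ≤ max (dist a c₁) (dist c₁ z) := hu a c₁ z
  have h2 : dist c₁ z ≤ r₁ := by rw [dist_comm]; exact hz₁
  have h3 : dist a z ≤ r₁ := le_trans h1 (max_le ha h2)
  calc dist a c₂ ≤ max (dist a z) (dist z c₂) := hu a z c₂
    _ ≤ r₂ := max_le (le_trans h3 hle) hz₂

private lemma sub_case {X : Type*} [MetricSpace X]
    (hu : ∀ x y z : X, dist x z ≤ max (dist x y) (dist y z))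
    {c₁ c₂ : X} {r₁ r₂ : ℝ} (hr₁ : 0 ≤ r₁) (hr₂ : 0 ≤ r₂)
    (hsub : closedBall c₁ r₁ ⊆ closedBall c₂ r₂)
    {b₀ : X} (hb₀t : b₀ ∈ closedBall c₂ r₂) (hb₀s : b₀ ∉ closedBall c₁ r₁) :
    hausdorffDist (closedBall c₁ r₁) (closedBall c₂ r₂) = diam (closedBall c₂ r₂) := by
  have hns : (closedBall c₁ r₁).Nonempty := nonempty_closedBall.mpr hr₁
  have hnt : (closedBall c₂ r₂).Nonempty := nonempty_closedBall.mpr hr₂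
  have hfin : EMetric.hausdorffEdist (closedBall c₁ r₁) (closedBall c₂ r₂) ≠ ⊤ :=
    hausdorffEdist_ne_top_of_nonempty_of_bounded hns hnt isBounded_closedBall isBounded_closedBall
  have hbt : Bornology.IsBounded (closedBall c₂ r₂) := isBounded_closedBall
  apply le_antisymm
  · apply hausdorffDist_le_of_mem_dist diam_nonneg
    · intro x hx
      exact ⟨x, hsub hx, by simpa using diam_nonneg⟩
    · intro y hy
      exact ⟨c₁, mem_closedBall_self hr₁,
        dist_le_diam_of_mem hbt hy (hsub (mem_closedBall_self hr₁))⟩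
  · -- key : every point of the big ball not in the small one satisfies dist w c₁ ≤ H
    have key : ∀ w ∈ closedBall c₂ r₂, w ∉ closedBall c₁ r₁ →
        dist w c₁ ≤ hausdorffDist (closedBall c₁ r₁) (closedBall c₂ r₂) := by
      intro w hwt hws
      have hw : r₁ < dist w c₁ := by
        by_contra h
        exact hws (mem_closedBall.mpr (le_of_not_gt h))
      have h1 : dist w c₁ ≤ infDist w (closedBall c₁ r₁) := by
        refine le_of_not_gt fun h => ?_
        obtain ⟨y, hy, hd⟩ := (infDist_lt_iff hns).mp h
        rw [ultra_const hu hw hy] at hd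
        exact lt_irrefl _ hd
      have h2 : infDist w (closedBall c₁ r₁) ≤
          hausdorffDist (closedBall c₂ r₂) (closedBall c₁ r₁) :=
        infDist_le_hausdorffDist_of_mem hwt (by rwa [EMetric.hausdorffEdist_comm])
      rw [hausdorffDist_comm] at h2
      linarith
    have hr₁H : r₁ ≤ hausdorffDist (closedBall c₁ r₁) (closedBall c₂ r₂) := by
      have hw : r₁ < dist b₀ c₁ := by
        by_contra h
        exact hb₀s (mem_closedBall.mpr (le_of_not_gt h))
      have := key b₀ hb₀t hb₀s
      linarith
    apply diam_le_of_forall_dist_le hausdorffDist_nonneg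
    intro x hx y hy
    have hxc : dist x c₁ ≤ hausdorffDist (closedBall c₁ r₁) (closedBall c₂ r₂) := by
      by_cases hxs : x ∈ closedBall c₁ r₁
      · exact le_trans (mem_closedBall.mp hxs) hr₁H
      · exact key x hx hxs
    have hyc : dist c₁ y ≤ hausdorffDist (closedBall c₁ r₁) (closedBall c₂ r₂) := by
      rw [dist_comm]
      by_cases hys : y ∈ closedBall c₁ r₁
      · exact le_trans (mem_closedBall.mp hys) hr₁H
      · exact key y hy hys
    calc dist x y ≤ max (dist x c₁) (dist c₁ y) := hu x c₁ y
      _ ≤ _ := max_le hxc hyc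

theorem hausdorffDist_balls_eq_diam_union {X : Type*} [MetricSpace X] [Fintype X]
    (hu : ∀ x y z : X, dist x z ≤ max (dist x y) (dist y z))
    (c₁ c₂ : X) (r₁ r₂ : ℝ) (hr₁ : 0 ≤ r₁) (hr₂ : 0 ≤ r₂)
    (hne : Metric.closedBall c₁ r₁ ≠ Metric.closedBall c₂ r₂) :
    Metric.hausdorffDist (Metric.closedBall c₁ r₁) (Metric.closedBall c₂ r₂) =
      Metric.diam (Metric.closedBall c₁ r₁ ∪ Metric.closedBall c₂ r₂) := by
  have hns : (closedBall c₁ r₁).Nonempty := nonempty_closedBall.mpr hr₁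
  have hnt : (closedBall c₂ r₂).Nonempty := nonempty_closedBall.mpr hr₂
  by_cases hint : (closedBall c₁ r₁ ∩ closedBall c₂ r₂).Nonempty
  · obtain ⟨z, hz₁, hz₂⟩ := hint
    rcases le_total r₁ r₂ with hle | hle
    · have hsub := ball_subset_ball' hu hz₁ hz₂ hle
      have hstrict : ∃ b ∈ closedBall c₂ r₂, b ∉ closedBall c₁ r₁ := by
        by_contra h
        push_neg at h
        exact hne (Set.Subset.antisymm hsub h)
      obtain ⟨b₀, hb₀t, hb₀s⟩ := hstrict
      rw [Set.union_eq_self_of_subset_left hsub]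
      exact sub_case hu hr₁ hr₂ hsub hb₀t hb₀s
    · have hsub := ball_subset_ball' hu hz₂ hz₁ hle
      have hstrict : ∃ b ∈ closedBall c₁ r₁, b ∉ closedBall c₂ r₂ := by
        by_contra h
        push_neg at h
        exact hne (Set.Subset.antisymm h hsub)
      obtain ⟨b₀, hb₀t, hb₀s⟩ := hstrict
      rw [hausdorffDist_comm, Set.union_comm, Set.union_eq_self_of_subset_left hsub]
      exact sub_case hu hr₂ hr₁ hsub hb₀t hb₀s
  · -- disjoint case
    have hc₂ : r₁ < dist c₂ c₁ := by
      by_contra h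
      exact hint ⟨c₂, mem_closedBall.mpr (le_of_not_gt h), mem_closedBall_self hr₂⟩
    have hc₁ : r₂ < dist c₁ c₂ := by
      by_contra h
      exact hint ⟨c₁, mem_closedBall_self hr₁, mem_closedBall.mpr (le_of_not_gt h)⟩
    have cross : ∀ x ∈ closedBall c₁ r₁, ∀ y ∈ closedBall c₂ r₂, dist x y = dist c₁ c₂ := by
      intro x hx y hy
      have h1 : dist c₁ y = dist c₁ c₂ := ultra_const hu hc₁ hy
      have hy' : r₁ < dist y c₁ := by rw [dist_comm]; rw [h1]; rw [dist_comm c₂ c₁] at hc₂; exact hc₂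
      have h2 : dist y x = dist y c₁ := ultra_const hu hy' hx
      rw [dist_comm x y, h2, dist_comm y c₁, h1]
    have hfin : EMetric.hausdorffEdist (closedBall c₁ r₁) (closedBall c₂ r₂) ≠ ⊤ :=
      hausdorffEdist_ne_top_of_nonempty_of_bounded hns hnt isBounded_closedBall
        isBounded_closedBall
    have hH : hausdorffDist (closedBall c₁ r₁) (closedBall c₂ r₂) = dist c₁ c₂ := by
      apply le_antisymm
      · apply hausdorffDist_le_of_mem_dist dist_nonneg
        · intro x hx
          exact ⟨c₂, mem_closedBall_self hr₂, le_of_eq (cross x hx c₂ (mem_closedBall_self hr₂))⟩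
        · intro y hy
          refine ⟨c₁, mem_closedBall_self hr₁, ?_⟩
          rw [dist_comm]
          exact le_of_eq (cross c₁ (mem_closedBall_self hr₁) y hy)
      · have h1 : dist c₁ c₂ ≤ infDist c₁ (closedBall c₂ r₂) := by
          refine le_of_not_gt fun h => ?_
          obtain ⟨y, hy, hd⟩ := (Metric.infDist_lt_iff hnt).mp h
          rw [cross c₁ (mem_closedBall_self hr₁) y hy] at hd
          exact lt_irrefl _ hd
        exact le_trans h1 (infDist_le_hausdorffDist_of_mem (mem_closedBall_self hr₁) hfin)
    have hD : diam (closedBall c₁ r₁ ∪ closedBall c₂ r₂) = dist c₁ c₂ := by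
      apply le_antisymm
      · apply diam_le_of_forall_dist_le dist_nonneg
        intro x hx y hy
        rcases hx with hx | hx <;> rcases hy with hy | hy
        · calc dist x y ≤ max (dist x c₁) (dist c₁ y) := hu x c₁ y
            _ ≤ r₁ := max_le (mem_closedBall.mp hx) (by rw [dist_comm]; exact mem_closedBall.mp hy)
            _ ≤ dist c₁ c₂ := by rw [dist_comm c₂ c₁] at hc₂; linarith
        · exact le_of_eq (cross x hx y hy)
        · rw [dist_comm]; exact le_of_eq (cross y hy x hx)
        · calc dist x y ≤ max (dist x c₂) (dist c₂ y) := hu x c₂ y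
            _ ≤ r₂ := max_le (mem_closedBall.mp hx) (by rw [dist_comm]; exact mem_closedBall.mp hy)
            _ ≤ dist c₁ c₂ := le_of_lt hc₁
      · exact dist_le_diam_of_mem (isBounded_closedBall.union isBounded_closedBall)
          (Set.mem_union_left _ (mem_closedBall_self hr₁))
          (Set.mem_union_right _ (mem_closedBall_self hr₂))
    rw [hH, hD]
end

section
/- Let (X, d) be a finite nonempty ultrametric space and let 𝓑 be the set of all closed balls of X. Then the Hausdorff distance restricted to 𝓑 is an ultrametric: d_H(B₁,B₂) ≤ max{d_H(B₁,B₃), d_H(B₃,B₂)} for all closed balls B₁, B₂, B₃. -/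
/-!
In an ultrametric space the triangle inequality `dist x z ≤ max (dist x y) (dist y z)` passes
to infimum distances, because `max a (⨅ i, f i) = ⨅ i, max a (f i)` in the complete linear order
`ℝ≥0∞`; the argument for the usual triangle inequality of the Hausdorff distance then goes
through with `+` replaced by `max`. Closed balls of nonnegative radius are nonempty and bounded,
so their Hausdorff edistances are finite.
-/

open Metric ENNReal

namespace IsUltrametricDist

variable {X : Type*} [PseudoMetricSpace X] [IsUltrametricDist X] {x y : X} {s t u : Set X}

lemma edist_triangle_max (x y z : X) : edist x z ≤ max (edist x y) (edist y z) := by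
  simp only [edist_dist, ← ENNReal.ofReal_max]
  exact ENNReal.ofReal_le_ofReal (dist_triangle_max x y z)

lemma infEDist_le_max_edist_infEDist : infEDist x s ≤ max (edist x y) (infEDist y s) :=
  calc ⨅ z ∈ s, edist x z ≤ ⨅ z ∈ s, max (edist x y) (edist y z) :=
        iInf₂_mono fun z _ ↦ edist_triangle_max x y z
    _ = max (edist x y) (⨅ z ∈ s, edist y z) := by rw [sup_iInf₂_eq]

lemma infEDist_le_max_infEDist_hausdorffEDist :
    infEDist x t ≤ max (infEDist x s) (hausdorffEDist s t) :=
  calc infEDist x t ≤ ⨅ y ∈ s, max (edist x y) (hausdorffEDist s t) :=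
        le_iInf₂ fun y hy ↦ infEDist_le_max_edist_infEDist.trans
          (max_le_max_left _ (infEDist_le_hausdorffEDist_of_mem hy))
    _ = max (infEDist x s) (hausdorffEDist s t) := by rw [infEDist, iInf₂_sup_eq]

lemma hausdorffEDist_triangle_max :
    hausdorffEDist s u ≤ max (hausdorffEDist s t) (hausdorffEDist t u) := by
  refine hausdorffEDist_le_of_infEDist (fun x hx ↦ ?_) (fun x hx ↦ ?_)
  · calc infEDist x u ≤ max (infEDist x t) (hausdorffEDist t u) :=
          infEDist_le_max_infEDist_hausdorffEDist
      _ ≤ max (hausdorffEDist s t) (hausdorffEDist t u) :=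
          max_le_max_right _ (infEDist_le_hausdorffEDist_of_mem hx)
  · calc infEDist x s ≤ max (infEDist x t) (hausdorffEDist t s) :=
          infEDist_le_max_infEDist_hausdorffEDist
      _ ≤ max (hausdorffEDist s t) (hausdorffEDist t u) := by
          rw [max_comm, hausdorffEDist_comm (s := t), hausdorffEDist_comm (s := t) (t := u)]
          exact max_le_max_left _ (infEDist_le_hausdorffEDist_of_mem hx)

lemma hausdorffDist_triangle_max (fin : hausdorffEDist s t ≠ ⊤) :
    hausdorffDist s u ≤ max (hausdorffDist s t) (hausdorffDist t u) := by
  by_cases hsu : hausdorffEDist s u = ⊤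
  · rw [hausdorffDist, hsu, toReal_top]
    exact le_max_of_le_left hausdorffDist_nonneg
  have htu : hausdorffEDist t u ≠ ⊤ := by
    refine ne_top_of_le_ne_top (max_ne_top ?_ hsu) hausdorffEDist_triangle_max
    rwa [hausdorffEDist_comm]
  rw [hausdorffDist, hausdorffDist, hausdorffDist, ← toReal_max fin htu]
  exact toReal_mono (max_ne_top fin htu) hausdorffEDist_triangle_max

end IsUltrametricDist

theorem hausdorffDist_ultrametric_on_balls_general {X : Type*} [MetricSpace X]
    (hu : ∀ x y z : X, dist x z ≤ max (dist x y) (dist y z))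
    (c₁ c₂ c₃ : X) (r₁ r₂ r₃ : ℝ) (hr₁ : 0 ≤ r₁) (hr₃ : 0 ≤ r₃) :
    Metric.hausdorffDist (Metric.closedBall c₁ r₁) (Metric.closedBall c₂ r₂) ≤
      max (Metric.hausdorffDist (Metric.closedBall c₁ r₁) (Metric.closedBall c₃ r₃))
        (Metric.hausdorffDist (Metric.closedBall c₃ r₃) (Metric.closedBall c₂ r₂)) := by
  have : IsUltrametricDist X := ⟨hu⟩
  exact IsUltrametricDist.hausdorffDist_triangle_max <|
    hausdorffEDist_ne_top_of_nonempty_of_bounded (nonempty_closedBall.2 hr₁)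
      (nonempty_closedBall.2 hr₃) isBounded_closedBall isBounded_closedBall

theorem hausdorffDist_ultrametric_on_balls {X : Type*} [MetricSpace X] [Fintype X] [Nonempty X]
    (hu : ∀ x y z : X, dist x z ≤ max (dist x y) (dist y z))
    (c₁ c₂ c₃ : X) (r₁ r₂ r₃ : ℝ) (hr₁ : 0 ≤ r₁) (hr₂ : 0 ≤ r₂) (hr₃ : 0 ≤ r₃) :
    Metric.hausdorffDist (Metric.closedBall c₁ r₁) (Metric.closedBall c₂ r₂) ≤
      max (Metric.hausdorffDist (Metric.closedBall c₁ r₁) (Metric.closedBall c₃ r₃))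
        (Metric.hausdorffDist (Metric.closedBall c₃ r₃) (Metric.closedBall c₂ r₂)) :=
  hausdorffDist_ultrametric_on_balls_general hu c₁ c₂ c₃ r₁ r₂ r₃ hr₁ hr₃
end

section
/- Let X be a finite nonempty set and 𝓕 a family of nonempty subsets of X such that: (a) X ∈ 𝓕 and {x} ∈ 𝓕 for every x ∈ X; (b) any two members of 𝓕 with nonempty intersection are comparable by inclusion. Then there exists an ultrametric d on X such that 𝓕 is exactly the set of all closed balls of (X, d). -/
open Set

theorem exists_ultrametric_with_ballean {α : Type*} [Fintype α] [Nonempty α]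
    (𝓕 : Set (Set α))
    (hne : ∀ F ∈ 𝓕, F.Nonempty)
    (huniv : Set.univ ∈ 𝓕)
    (hsing : ∀ x : α, {x} ∈ 𝓕)
    (hcomp : ∀ F₁ ∈ 𝓕, ∀ F₂ ∈ 𝓕, (F₁ ∩ F₂).Nonempty → F₁ ⊆ F₂ ∨ F₂ ⊆ F₁) :
    ∃ d : α → α → ℝ,
      (∀ x y, d x y = d y x) ∧
      (∀ x y, d x y = 0 ↔ x = y) ∧
      (∀ x y z, d x z ≤ max (d x y) (d y z)) ∧
      𝓕 = {B : Set α | ∃ (c : α) (r : ℝ), 0 ≤ r ∧ B = {x | d x c ≤ r}} := by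
  classical
  set T : α → α → Set ℕ := fun x y => {n | ∃ F ∈ 𝓕, x ∈ F ∧ y ∈ F ∧ F.ncard = n} with hT
  have hTne : ∀ x y, (T x y).Nonempty :=
    fun x y => ⟨(univ : Set α).ncard, univ, huniv, mem_univ x, mem_univ y, rfl⟩
  set m : α → α → ℕ := fun x y => sInf (T x y) with hm
  have hmem : ∀ x y, ∃ F ∈ 𝓕, x ∈ F ∧ y ∈ F ∧ F.ncard = m x y :=
    fun x y => Nat.sInf_mem (hTne x y)
  have hle : ∀ x y, ∀ F ∈ 𝓕, x ∈ F → y ∈ F → m x y ≤ F.ncard :=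
    fun x y F hF hx hy => Nat.sInf_le ⟨F, hF, hx, hy, rfl⟩
  have hpos : ∀ x y, 0 < m x y := by
    intro x y
    obtain ⟨F, hF, hx, hy, hc⟩ := hmem x y
    rw [← hc, Set.ncard_pos]
    exact hne F hF
  have hsymm : ∀ x y, m x y = m y x := by
    intro x y
    have : T x y = T y x := by
      ext n; constructor <;> rintro ⟨F, hF, hx, hy, hc⟩ <;> exact ⟨F, hF, hy, hx, hc⟩
    simp only [hm, this]
  have hultra : ∀ x y z, m x z ≤ max (m x y) (m y z) := by
    intro x y z
    obtain ⟨F₁, hF₁, hx₁, hy₁, hc₁⟩ := hmem x y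
    obtain ⟨F₂, hF₂, hy₂, hz₂, hc₂⟩ := hmem y z
    rcases hcomp F₁ hF₁ F₂ hF₂ ⟨y, hy₁, hy₂⟩ with h | h
    · exact le_max_of_le_right (hc₂ ▸ hle x z F₂ hF₂ (h hx₁) hz₂)
    · exact le_max_of_le_left (hc₁ ▸ hle x z F₁ hF₁ hx₁ (h hz₂))
  set d : α → α → ℝ := fun x y => if x = y then 0 else (m x y : ℝ) with hd
  have hdnn : ∀ x y, 0 ≤ d x y := by
    intro x y; simp only [hd]; split <;> positivity
  refine ⟨d, ?_, ?_, ?_, ?_⟩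
  · intro x y
    simp only [hd]
    rcases eq_or_ne x y with h | h
    · simp [h]
    · rw [if_neg h, if_neg (Ne.symm h), hsymm]
  · intro x y
    simp only [hd]
    by_cases h : x = y
    · simp [h]
    · rw [if_neg h]
      constructor
      · intro h0
        have := hpos x y
        have : m x y = 0 := by exact_mod_cast h0
        omega
      · intro h0; exact absurd h0 h
  · intro x y z
    rcases eq_or_ne x z with hxz | hxz
    · rw [hd]; simp only [if_pos hxz]
      exact le_max_of_le_left (hdnn x y)
    rcases eq_or_ne x y with hxy | hxy
    · subst hxy
      have : d x z = d x z := rfl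
      exact le_max_of_le_right le_rfl
    rcases eq_or_ne y z with hyz | hyz
    · subst hyz
      exact le_max_of_le_left le_rfl
    · simp only [hd, if_neg hxz, if_neg hxy, if_neg hyz]
      have := hultra x y z
      calc ((m x z : ℕ) : ℝ) ≤ ((max (m x y) (m y z) : ℕ) : ℝ) := by exact_mod_cast this
        _ = max ((m x y : ℕ) : ℝ) ((m y z : ℕ) : ℝ) := by
            exact_mod_cast Nat.cast_max (m x y) (m y z)
  · ext B
    simp only [mem_setOf_eq]
    constructor
    · intro hB
      obtain ⟨c, hc⟩ := hne B hB
      refine ⟨c, (B.ncard : ℝ), by positivity, ?_⟩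
      ext x
      simp only [mem_setOf_eq]
      constructor
      · intro hx
        simp only [hd]
        split
        · positivity
        · exact_mod_cast hle x c B hB hx hc
      · intro hx
        rcases eq_or_ne x c with h | h
        · rwa [h]
        · simp only [hd, if_neg h] at hx
          have hmle : m x c ≤ B.ncard := by exact_mod_cast hx
          obtain ⟨H, hH, hxH, hcH, hcard⟩ := hmem x c
          rcases hcomp H hH B hB ⟨c, hcH, hc⟩ with hsub | hsub
          · exact hsub hxH
          · have : B = H := Set.eq_of_subset_of_ncard_le hsub (by omega)
            rw [this]; exact hxH
    · rintro ⟨c, r, hr, rfl⟩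
      rcases lt_or_ge r 1 with hr1 | hr1
      · have : {x | d x c ≤ r} = {c} := by
          ext x
          simp only [mem_setOf_eq, mem_singleton_iff]
          constructor
          · intro hx
            by_contra h
            simp only [hd, if_neg h] at hx
            have h1 : (1 : ℝ) ≤ (m x c : ℝ) := by exact_mod_cast hpos x c
            linarith
          · rintro rfl
            simp only [hd, if_pos rfl]; exact hr
        rw [this]; exact hsing c
      · -- find the largest member of 𝓕 containing c with ncard ≤ r
        set K : Set ℕ := {n | ∃ F ∈ 𝓕, c ∈ F ∧ F.ncard = n ∧ (n : ℝ) ≤ r} with hK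
        have hKne : K.Nonempty := by
          refine ⟨1, {c}, hsing c, rfl, by simp, by simpa using hr1⟩
        have hKbdd : BddAbove K := by
          refine ⟨Fintype.card α, ?_⟩
          rintro n ⟨F, hF, _, hcard, _⟩
          rw [← hcard]
          exact le_trans (Set.ncard_le_ncard (subset_univ F)) (by simp [Set.ncard_univ])
        have hmax := Nat.sSup_mem hKne hKbdd
        obtain ⟨G, hG, hcG, hcardG, hGr⟩ := hmax
        have hub : ∀ F ∈ 𝓕, c ∈ F → (F.ncard : ℝ) ≤ r → F.ncard ≤ G.ncard := by
          intro F hF hcF hFr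
          rw [hcardG]
          exact le_csSup hKbdd ⟨F, hF, hcF, rfl, hFr⟩
        have : {x | d x c ≤ r} = G := by
          ext x
          simp only [mem_setOf_eq]
          constructor
          · intro hx
            rcases eq_or_ne x c with h | h
            · rwa [h]
            · simp only [hd, if_neg h] at hx
              obtain ⟨H, hH, hxH, hcH, hcard⟩ := hmem x c
              have hHr : (H.ncard : ℝ) ≤ r := by rw [hcard]; exact hx
              have hHG : H.ncard ≤ G.ncard := hub H hH hcH hHr
              rcases hcomp H hH G hG ⟨c, hcH, hcG⟩ with hsub | hsub
              · exact hsub hxH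
              · have : G = H := Set.eq_of_subset_of_ncard_le hsub hHG
                rw [this]; exact hxH
          · intro hx
            simp only [hd]
            split
            · exact hr
            · calc ((m x c : ℕ) : ℝ) ≤ (G.ncard : ℝ) := by
                    exact_mod_cast hle x c G hG hx hcG
                _ ≤ r := by rw [hcardG]; exact hGr
        rw [this]; exact hG
end

section
/- Let X be a finite nonempty set and 𝓕 a family of nonempty subsets of X containing X and all singletons, such that any two members with nonempty intersection are comparable by inclusion. Define d(x,y) = min{|F| : x, y ∈ F ∈ 𝓕} − 1. Then d is an ultrametric on X. -/
theorem card_min_ultrametric {α : Type*} [Fintype α] [Nonempty α]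
    (𝓕 : Set (Set α))
    (huniv : Set.univ ∈ 𝓕)
    (hsing : ∀ x : α, {x} ∈ 𝓕)
    (hcomp : ∀ F₁ ∈ 𝓕, ∀ F₂ ∈ 𝓕, (F₁ ∩ F₂).Nonempty → F₁ ⊆ F₂ ∨ F₂ ⊆ F₁)
    (d : α → α → ℝ)
    (hd : ∀ x y : α,
      d x y = sInf {r : ℝ | ∃ F ∈ 𝓕, x ∈ F ∧ y ∈ F ∧ r = (F.ncard : ℝ)} - 1) :
    (∀ x y, d x y = d y x) ∧ (∀ x y, d x y = 0 ↔ x = y) ∧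
      (∀ x y z, d x z ≤ max (d x y) (d y z)) := by
  set S : α → α → Set ℝ :=
    fun x y => {r : ℝ | ∃ F ∈ 𝓕, x ∈ F ∧ y ∈ F ∧ r = (F.ncard : ℝ)} with hS
  have hfin : ∀ x y, (S x y).Finite := by
    intro x y
    apply Set.Finite.subset ((Set.finite_Iic (Nat.card α)).image (fun n : ℕ => (n : ℝ)))
    rintro r ⟨F, hF, hx, hy, rfl⟩
    refine ⟨F.ncard, ?_, rfl⟩
    have := Set.ncard_le_ncard (Set.subset_univ F) Set.finite_univ
    rw [Set.ncard_univ] at this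
    simpa using this
  have hne : ∀ x y, (S x y).Nonempty := fun x y =>
    ⟨(Set.univ : Set α).ncard, Set.univ, huniv, trivial, trivial, rfl⟩
  have hmem : ∀ x y, sInf (S x y) ∈ S x y := fun x y => (hne x y).csInf_mem (hfin x y)
  have hle : ∀ x y, ∀ r ∈ S x y, sInf (S x y) ≤ r := fun x y r hr =>
    csInf_le (hfin x y).bddBelow hr
  have hsymmS : ∀ x y, S x y = S y x := by
    intro x y; ext r; constructor <;> rintro ⟨F, hF, hx, hy, rfl⟩ <;> exact ⟨F, hF, hy, hx, rfl⟩
  have hd' : ∀ x y, d x y = sInf (S x y) - 1 := hd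
  refine ⟨fun x y => by rw [hd', hd', hsymmS], fun x y => ?_, fun x y z => ?_⟩
  · rw [hd', sub_eq_zero]
    constructor
    · intro h
      obtain ⟨F, hF, hx, hy, hcard⟩ := hmem x y
      have h1 : (F.ncard : ℝ) = 1 := by rw [← hcard, h]
      have : F.ncard = 1 := by exact_mod_cast h1
      obtain ⟨a, rfl⟩ := Set.ncard_eq_one.mp this
      rw [Set.mem_singleton_iff] at hx hy
      rw [hx, hy]
    · rintro rfl
      have h1 : sInf (S x x) ≤ 1 := by
        have := hle x x ((({x} : Set α)).ncard : ℝ) ⟨{x}, hsing x, rfl, rfl, rfl⟩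
        simpa using this
      have h2 : (1 : ℝ) ≤ sInf (S x x) := by
        apply le_csInf (hne x x)
        rintro r ⟨F, hF, hx', _, rfl⟩
        have : 1 ≤ F.ncard := (Set.ncard_pos (Set.toFinite F)).mpr ⟨x, hx'⟩
        exact_mod_cast this
      linarith
  · rw [hd', hd', hd', max_sub_sub_right, sub_le_sub_iff_right]
    obtain ⟨F₁, hF₁, hx₁, hy₁, hc₁⟩ := hmem x y
    obtain ⟨F₂, hF₂, hy₂, hz₂, hc₂⟩ := hmem y z
    rcases hcomp F₁ hF₁ F₂ hF₂ ⟨y, hy₁, hy₂⟩ with h | h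
    · calc sInf (S x z) ≤ (F₂.ncard : ℝ) := hle x z _ ⟨F₂, hF₂, h hx₁, hz₂, rfl⟩
        _ ≤ _ := hc₂ ▸ le_max_right _ _
    · calc sInf (S x z) ≤ (F₁.ncard : ℝ) := hle x z _ ⟨F₁, hF₁, hx₁, h hz₂, rfl⟩
        _ ≤ _ := hc₁ ▸ le_max_left _ _
end

section
/- Let X be a finite nonempty set and 𝓕 a family of nonempty subsets of X containing X and all singletons, with any two intersecting members comparable by inclusion. With the ultrametric d(x,y) = min{|F| : x, y ∈ F ∈ 𝓕} − 1, the family 𝓕 is exactly the set of closed balls of (X, d): a subset B ⊆ X is a closed ball of (X,d) if and only if B ∈ 𝓕. -/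
/-! Let `μ(x, y)` be the least cardinality of a member of `𝓕` containing `x` and `y`, so that
`d = μ - 1`. The key point is that two members of a laminar family sharing a point `c` are nested,
so a member `G ∋ c` is contained in any member `F ∋ c` with `|G| ≤ |F|`. Hence for `c ∈ F ∈ 𝓕`,
the points `x` with `μ(x, c) ≤ ρ` form exactly `F` as soon as `|F| ≤ ρ` and no member containing
`c` of cardinality at most `ρ` is larger than `F`. This applies to `F = B ∈ 𝓕` with `ρ = |B|`, and
to the ball of radius `r` about `c` with `ρ = r + 1` and `F` a largest member containing `c` of
cardinality at most `r + 1` (the singleton `{c}` is a candidate). -/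

section

variable {α : Type*} {𝓕 : Set (Set α)}

def IsLaminar (𝓕 : Set (Set α)) : Prop :=
  ∀ F₁ ∈ 𝓕, ∀ F₂ ∈ 𝓕, (F₁ ∩ F₂).Nonempty → F₁ ⊆ F₂ ∨ F₂ ⊆ F₁

def coverCards (𝓕 : Set (Set α)) (x y : α) : Set ℝ :=
  {r | ∃ F ∈ 𝓕, x ∈ F ∧ y ∈ F ∧ r = (F.ncard : ℝ)}

theorem sInf_coverCards_le {F : Set α} (hF : F ∈ 𝓕) {x y : α} (hx : x ∈ F) (hy : y ∈ F) :
    sInf (coverCards 𝓕 x y) ≤ F.ncard :=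
  csInf_le ⟨0, by rintro _ ⟨G, -, -, -, rfl⟩; positivity⟩ ⟨F, hF, hx, hy, rfl⟩

theorem exists_mem_ncard_eq_sInf_coverCards [Finite α] (huniv : Set.univ ∈ 𝓕) (x y : α) :
    ∃ F ∈ 𝓕, x ∈ F ∧ y ∈ F ∧ (F.ncard : ℝ) = sInf (coverCards 𝓕 x y) := by
  have hfin : (coverCards 𝓕 x y).Finite :=
    (Set.finite_range fun F : Set α ↦ (F.ncard : ℝ)).subset <| by
      rintro _ ⟨F, -, -, -, rfl⟩
      exact ⟨F, rfl⟩
  have hne : (coverCards 𝓕 x y).Nonempty := ⟨_, Set.univ, huniv, trivial, trivial, rfl⟩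
  obtain ⟨F, hF, hx, hy, hr⟩ := hne.csInf_mem hfin
  exact ⟨F, hF, hx, hy, hr.symm⟩

theorem IsLaminar.mem_of_ncard_le [Finite α] (hl : IsLaminar 𝓕) {F G : Set α} (hF : F ∈ 𝓕)
    (hG : G ∈ 𝓕) {c x : α} (hcF : c ∈ F) (hcG : c ∈ G) (hx : x ∈ G)
    (hcard : G.ncard ≤ F.ncard) : x ∈ F := by
  rcases hl F hF G hG ⟨c, hcF, hcG⟩ with hFG | hGF
  · rwa [Set.eq_of_subset_of_ncard_le hFG hcard]
  · exact hGF hx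

theorem IsLaminar.setOf_sInf_coverCards_le_eq [Finite α] (hl : IsLaminar 𝓕)
    (huniv : Set.univ ∈ 𝓕) {F : Set α} (hF : F ∈ 𝓕) {c : α} (hc : c ∈ F) {ρ : ℝ}
    (hFρ : (F.ncard : ℝ) ≤ ρ)
    (hmax : ∀ G ∈ 𝓕, c ∈ G → (G.ncard : ℝ) ≤ ρ → G.ncard ≤ F.ncard) :
    {x | sInf (coverCards 𝓕 x c) ≤ ρ} = F := by
  ext x
  refine ⟨fun hx ↦ ?_, fun hx ↦ (sInf_coverCards_le hF hx hc).trans hFρ⟩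
  obtain ⟨G, hG, hxG, hcG, hGcard⟩ := exists_mem_ncard_eq_sInf_coverCards huniv x c
  exact hl.mem_of_ncard_le hF hG hc hcG hxG (hmax G hG hcG (hGcard ▸ hx))

theorem exists_mem_forall_ncard_le [Finite α] (hsing : ∀ x : α, {x} ∈ 𝓕) (c : α) {ρ : ℝ}
    (hρ : 1 ≤ ρ) :
    ∃ F ∈ 𝓕, c ∈ F ∧ (F.ncard : ℝ) ≤ ρ ∧
      ∀ G ∈ 𝓕, c ∈ G → (G.ncard : ℝ) ≤ ρ → G.ncard ≤ F.ncard := by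
  obtain ⟨F, ⟨hF, hcF, hFρ⟩, hmax⟩ :=
    Set.exists_max_image {F | F ∈ 𝓕 ∧ c ∈ F ∧ (F.ncard : ℝ) ≤ ρ} Set.ncard (Set.toFinite _)
      ⟨{c}, hsing c, rfl, by rwa [Set.ncard_singleton, Nat.cast_one]⟩
  exact ⟨F, hF, hcF, hFρ, fun G hG hcG hGρ ↦ hmax G ⟨hG, hcG, hGρ⟩⟩

end

theorem ballean_eq_family_general {α : Type*} [Fintype α]
    (𝓕 : Set (Set α))
    (hne : ∀ F ∈ 𝓕, F.Nonempty)
    (huniv : Set.univ ∈ 𝓕)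
    (hsing : ∀ x : α, {x} ∈ 𝓕)
    (hcomp : ∀ F₁ ∈ 𝓕, ∀ F₂ ∈ 𝓕, (F₁ ∩ F₂).Nonempty → F₁ ⊆ F₂ ∨ F₂ ⊆ F₁)
    (d : α → α → ℝ)
    (hd : ∀ x y : α,
      d x y = sInf {r : ℝ | ∃ F ∈ 𝓕, x ∈ F ∧ y ∈ F ∧ r = (F.ncard : ℝ)} - 1) :
    ∀ B : Set α, (∃ (c : α) (r : ℝ), 0 ≤ r ∧ B = {x | d x c ≤ r}) ↔ B ∈ 𝓕 := by
  have hl : IsLaminar 𝓕 := hcomp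
  have hball : ∀ c r, {x | d x c ≤ r} = {x | sInf (coverCards 𝓕 x c) ≤ r + 1} := by
    intro c r
    ext x
    show d x c ≤ r ↔ _
    rw [hd]
    exact sub_le_iff_le_add
  intro B
  constructor
  · rintro ⟨c, r, hr, rfl⟩
    obtain ⟨F, hF, hcF, hFr, hmax⟩ :=
      exists_mem_forall_ncard_le hsing c (ρ := r + 1) (by linarith)
    rwa [hball, hl.setOf_sInf_coverCards_le_eq huniv hF hcF hFr hmax]
  · intro hB
    obtain ⟨c, hcB⟩ := hne B hB
    have hcard : (1 : ℝ) ≤ B.ncard := by exact_mod_cast (Set.ncard_pos).2 ⟨c, hcB⟩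
    refine ⟨c, B.ncard - 1, by linarith, ?_⟩
    rw [hball, sub_add_cancel,
      hl.setOf_sInf_coverCards_le_eq huniv hB hcB le_rfl fun G _ _ hG ↦ mod_cast hG]

theorem ballean_eq_family {α : Type*} [Fintype α] [Nonempty α]
    (𝓕 : Set (Set α))
    (hne : ∀ F ∈ 𝓕, F.Nonempty)
    (huniv : Set.univ ∈ 𝓕)
    (hsing : ∀ x : α, {x} ∈ 𝓕)
    (hcomp : ∀ F₁ ∈ 𝓕, ∀ F₂ ∈ 𝓕, (F₁ ∩ F₂).Nonempty → F₁ ⊆ F₂ ∨ F₂ ⊆ F₁)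
    (d : α → α → ℝ)
    (hd : ∀ x y : α,
      d x y = sInf {r : ℝ | ∃ F ∈ 𝓕, x ∈ F ∧ y ∈ F ∧ r = (F.ncard : ℝ)} - 1) :
    ∀ B : Set α, (∃ (c : α) (r : ℝ), 0 ≤ r ∧ B = {x | d x c ≤ r}) ↔ B ∈ 𝓕 :=
  ballean_eq_family_general 𝓕 hne huniv hsing hcomp d hd
end
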